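/- arXiv:1807.01096 — 7 statements merged into one kernel-verified Lean document; each statement's English description precedes it below -/
import Mathlib

section
/- Let k > 1 and κ > 1 be real numbers and let Ψ : ℝ → ℝ be a continuous, strictly increasing surjection with Ψ(0) = 0, Ψ(1) = 1, Ψ(−1) = −1, satisfying Ψ(k·x) = κ·Ψ(x) for all x ∈ ℝ. Assume moreover that Ψ is continuously differentiable on ℝ ∖ {0} with Ψ′(x) > 0 for every x ≠ 0. Then Ψ is quasi-symmetric: there exists a constant M ≥ 1 such that M⁻¹ ≤ (Ψ(x) − Ψ(x−t))/(Ψ(x+t) − Ψ(x)) ≤ M for every x ∈ ℝ and every t > 0. -/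
/-!
The ratio is unchanged under `(x, t) ↦ (k ^ n * x, k ^ n * t)`, because the functional
equation extends to `Ψ (k ^ n * x) = κ ^ n * Ψ x` for `n : ℤ`; so it suffices to bound it on
the shell `1 ≤ ‖(x, t)‖ = max |x| t ≤ k`. There, if `t ≥ 1 / 2` the pair `(x, t)` ranges over
a compact set on which the ratio is continuous and positive. If `t < 1 / 2` then `|x| ≥ 1`, so
`[x - t, x + t]` lies in the compact set `1 / 2 ≤ |y| ≤ k + 1`, which avoids `0`; there `Ψ'`
is pinched between `M⁻¹` and `M`, and the mean value theorem on both halves of the interval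
pinches the ratio between `M⁻²` and `M²`.
-/

open Set Metric

def LogBoundedOn {α : Type*} (f : α → ℝ) (s : Set α) : Prop :=
  ∃ M : ℝ, 1 ≤ M ∧ ∀ p ∈ s, M⁻¹ ≤ f p ∧ f p ≤ M

section LogBoundedOn

variable {α : Type*} {f : α → ℝ} {s t : Set α}

theorem LogBoundedOn.mono (hf : LogBoundedOn f t) (hst : s ⊆ t) : LogBoundedOn f s :=
  let ⟨M, hM, h⟩ := hf
  ⟨M, hM, fun p hp => h p (hst hp)⟩

theorem LogBoundedOn.union (hs : LogBoundedOn f s) (ht : LogBoundedOn f t) :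
    LogBoundedOn f (s ∪ t) := by
  obtain ⟨M, hM, hMs⟩ := hs
  obtain ⟨N, hN, hNt⟩ := ht
  have widen : ∀ L, 1 ≤ L → L ≤ max M N → ∀ x, L⁻¹ ≤ x ∧ x ≤ L →
      (max M N)⁻¹ ≤ x ∧ x ≤ max M N := fun L hL hLM x hx =>
    ⟨(inv_anti₀ (by linarith) hLM).trans hx.1, hx.2.trans hLM⟩
  refine ⟨max M N, le_max_of_le_left hM, fun p hp => ?_⟩
  rcases hp with hp | hp
  · exact widen M hM (le_max_left M N) _ (hMs p hp)
  · exact widen N hN (le_max_right M N) _ (hNt p hp)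

theorem logBoundedOn_of_bounds {m M : ℝ} (hm : 0 < m)
    (h : ∀ p ∈ s, m ≤ f p ∧ f p ≤ M) : LogBoundedOn f s := by
  refine ⟨max 1 (max M m⁻¹), le_max_left _ _, fun p hp => ⟨?_, ?_⟩⟩
  · calc (max 1 (max M m⁻¹))⁻¹ ≤ m⁻¹⁻¹ :=
          inv_anti₀ (inv_pos.2 hm) ((le_max_right _ _).trans (le_max_right _ _))
      _ = m := inv_inv m
      _ ≤ f p := (h p hp).1
  · exact (h p hp).2.trans ((le_max_left _ _).trans (le_max_right _ _))

end LogBoundedOn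

theorem IsCompact.logBoundedOn {α : Type*} [TopologicalSpace α] {K : Set α} {f : α → ℝ}
    (hK : IsCompact K) (hf : ContinuousOn f K) (hpos : ∀ p ∈ K, 0 < f p) :
    LogBoundedOn f K := by
  obtain ⟨m, hm, hmf⟩ := hK.exists_forall_le' hf hpos
  obtain ⟨M, hM⟩ := hK.bddAbove_image hf
  exact logBoundedOn_of_bounds hm fun p hp => ⟨hmf p hp, hM (mem_image_of_mem f hp)⟩

theorem LogBoundedOn.of_zpow_smul_invariant {E : Type*} [NormedAddCommGroup E]
    [NormedSpace ℝ E] {f : E → ℝ} {s : Set E} {k : ℝ}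
    (hbdd : LogBoundedOn f (s ∩ {p | 1 ≤ ‖p‖ ∧ ‖p‖ ≤ k})) (hk : 1 < k)
    (hs : ∀ c : ℝ, 0 < c → ∀ p ∈ s, c • p ∈ s) (hs0 : (0 : E) ∉ s)
    (hf : ∀ (n : ℤ) (p : E), f (k ^ n • p) = f p) : LogBoundedOn f s := by
  obtain ⟨M, hM, hbound⟩ := hbdd
  refine ⟨M, hM, fun p hp => ?_⟩
  have hp0 : 0 < ‖p‖ := norm_pos_iff.2 fun h => hs0 (h ▸ hp)
  obtain ⟨n, hn, hn'⟩ := exists_mem_Ico_zpow hp0 hk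
  have hkn : 0 < k ^ n := zpow_pos (by linarith) n
  have hq : ‖k ^ (-n) • p‖ = ‖p‖ / k ^ n := by
    rw [norm_smul, zpow_neg, Real.norm_of_nonneg (inv_pos.2 hkn).le, inv_mul_eq_div]
  have hfq : f (k ^ (-n) • p) = f p := by
    rw [← hf n, smul_smul, ← zpow_add₀ (by linarith), add_neg_cancel, zpow_zero, one_smul]
  rw [← hfq]
  refine hbound _ ⟨hs _ (zpow_pos (by linarith) _) p hp, ?_, ?_⟩
  · rwa [hq, le_div_iff₀ hkn, one_mul]
  · rw [hq, div_le_iff₀ hkn, ← zpow_one_add₀ (by linarith), add_comm]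
    exact hn'.le

theorem apply_zpow_mul_eq {G₀ H₀ : Type*} [GroupWithZero G₀] [GroupWithZero H₀] {Ψ : G₀ → H₀}
    {k : G₀} {κ : H₀} (hk : k ≠ 0) (hκ : κ ≠ 0) (h : ∀ x, Ψ (k * x) = κ * Ψ x) (n : ℤ) (x : G₀) :
    Ψ (k ^ n * x) = κ ^ n * Ψ x := by
  induction n using Int.induction_on generalizing x with
  | zero => simp
  | succ n ih => rw [zpow_add_one₀ hk, mul_assoc, ih, h, ← mul_assoc, ← zpow_add_one₀ hκ]
  | pred n ih =>
    have h_inv : Ψ (k⁻¹ * x) = κ⁻¹ * Ψ x := by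
      rw [eq_inv_mul_iff_mul_eq₀ hκ, ← h, mul_inv_cancel_left₀ hk]
    rw [zpow_sub_one₀ hk, mul_assoc, ih, h_inv, ← mul_assoc, ← zpow_sub_one₀ hκ]

theorem sub_mem_Icc_mul_of_hasDerivAt {f f' : ℝ → ℝ} {a b c C : ℝ} (hab : a < b)
    (hf : ∀ y ∈ Icc a b, HasDerivAt f (f' y) y) (hbounds : ∀ y ∈ Icc a b, f' y ∈ Icc c C) :
    f b - f a ∈ Icc (c * (b - a)) (C * (b - a)) := by
  obtain ⟨ξ, hξ, hslope⟩ := exists_hasDerivAt_eq_slope f f' hab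
    (HasDerivAt.continuousOn hf) fun y hy => hf y (Ioo_subset_Icc_self hy)
  have hsub : f b - f a = f' ξ * (b - a) := by
    rw [hslope, div_mul_cancel₀ _ (sub_pos.2 hab).ne']
  have hba : 0 ≤ b - a := (sub_pos.2 hab).le
  obtain ⟨hc, hC⟩ := hbounds ξ (Ioo_subset_Icc_self hξ)
  rw [hsub]
  exact ⟨mul_le_mul_of_nonneg_right hc hba, mul_le_mul_of_nonneg_right hC hba⟩

noncomputable def qsRatio (Ψ : ℝ → ℝ) (p : ℝ × ℝ) : ℝ :=
  (Ψ p.1 - Ψ (p.1 - p.2)) / (Ψ (p.1 + p.2) - Ψ p.1)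

section qsRatio

variable {Ψ : ℝ → ℝ}

theorem qsRatio_pos (hΨ : StrictMono Ψ) {p : ℝ × ℝ} (hp : 0 < p.2) : 0 < qsRatio Ψ p :=
  div_pos (sub_pos.2 (hΨ (by linarith))) (sub_pos.2 (hΨ (by linarith)))

theorem continuousOn_qsRatio (hc : Continuous Ψ) (hinj : Function.Injective Ψ) :
    ContinuousOn (qsRatio Ψ) {p | p.2 ≠ 0} :=
  ContinuousOn.div (by fun_prop) (by fun_prop) fun p hp =>
    sub_ne_zero.2 (hinj.ne (by simpa using hp))

theorem qsRatio_smul {u c : ℝ} (h : ∀ y, Ψ (u * y) = c * Ψ y) (hc : c ≠ 0) (p : ℝ × ℝ) :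
    qsRatio Ψ (u • p) = qsRatio Ψ p := by
  simp only [qsRatio, Prod.smul_fst, Prod.smul_snd, smul_eq_mul, ← mul_sub, ← mul_add, h]
  exact mul_div_mul_left _ _ hc

theorem logBoundedOn_qsRatio_of_hasDerivAt {Ψ' : ℝ → ℝ} {J : Set ℝ}
    (hΨ' : LogBoundedOn Ψ' J) (hderiv : ∀ y ∈ J, HasDerivAt Ψ (Ψ' y) y) :
    LogBoundedOn (qsRatio Ψ) {p | 0 < p.2 ∧ Icc (p.1 - p.2) (p.1 + p.2) ⊆ J} := by
  obtain ⟨M, hM, hbound⟩ := hΨ'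
  refine ⟨M ^ 2, one_le_pow₀ hM, ?_⟩
  rintro ⟨x, t⟩ ⟨ht, hJ⟩
  dsimp only at ht hJ
  have hleft := sub_mem_Icc_mul_of_hasDerivAt (f := Ψ) (by linarith : x - t < x)
    (fun y hy => hderiv y (hJ ⟨hy.1, by linarith [hy.2]⟩))
    (fun y hy => hbound y (hJ ⟨hy.1, by linarith [hy.2]⟩))
  have hright := sub_mem_Icc_mul_of_hasDerivAt (f := Ψ) (by linarith : x < x + t)
    (fun y hy => hderiv y (hJ ⟨by linarith [hy.1], hy.2⟩))
    (fun y hy => hbound y (hJ ⟨by linarith [hy.1], hy.2⟩))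
  rw [sub_sub_cancel] at hleft
  rw [add_sub_cancel_left] at hright
  have hMt : 0 < M⁻¹ * t := mul_pos (inv_pos.2 (by linarith)) ht
  have hM2 : M ^ 2 = M * t / (M⁻¹ * t) := by
    field_simp
  refine ⟨?_, ?_⟩
  · rw [hM2, inv_div]
    exact div_le_div₀ (hMt.trans_le hleft.1).le hleft.1 (hMt.trans_le hright.1) hright.2
  · rw [hM2]
    exact div_le_div₀ (by positivity) hleft.2 hMt hright.1

end qsRatio

theorem mem_Icc_prod_Icc_or_Icc_subset_closedBall_diff_ball {k : ℝ} {p : ℝ × ℝ} (hp : 0 < p.2)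
    (hp1 : 1 ≤ ‖p‖) (hpk : ‖p‖ ≤ k) :
    p ∈ Icc (-k) k ×ˢ Icc (1 / 2) k ∨
      Icc (p.1 - p.2) (p.1 + p.2) ⊆ closedBall 0 (k + 1) \ ball 0 (1 / 2) := by
  obtain ⟨x, t⟩ := p
  rw [Prod.norm_def, Real.norm_eq_abs, Real.norm_of_nonneg hp.le] at hp1 hpk
  dsimp only at hp hp1 hpk ⊢
  have hxk : |x| ≤ k := (le_max_left _ _).trans hpk
  have htk : t ≤ k := (le_max_right _ _).trans hpk
  by_cases ht : 1 / 2 ≤ t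
  · exact Or.inl ⟨abs_le.1 hxk, ht, htk⟩
  · have hx1 : 1 ≤ |x| := by
      rcases le_max_iff.1 hp1 with h | h
      · exact h
      · linarith
    refine Or.inr fun y hy => ⟨?_, ?_⟩
    · rw [mem_closedBall, dist_zero_right, Real.norm_eq_abs, abs_le]
      constructor <;> cases abs_le.1 hxk <;> linarith [hy.1, hy.2]
    · rw [mem_ball, dist_zero_right, Real.norm_eq_abs, not_lt]
      rcases le_abs'.1 hx1 with hx | hx
      · exact le_abs.2 (Or.inr (by linarith [hy.1, hy.2]))
      · exact le_abs.2 (Or.inl (by linarith [hy.1, hy.2]))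

theorem quasisymmetry_of_functional_equation_general
    (k κ : ℝ) (hk : 1 < k) (hκ : 1 < κ)
    (Ψ : ℝ → ℝ) (hcont : Continuous Ψ) (hmono : StrictMono Ψ)
    (hfun : ∀ x : ℝ, Ψ (k * x) = κ * Ψ x)
    (Ψ' : ℝ → ℝ)
    (hderiv : ∀ x : ℝ, x ≠ 0 → HasDerivAt Ψ (Ψ' x) x)
    (hderivCont : ContinuousOn Ψ' {x : ℝ | x ≠ 0})
    (hderivPos : ∀ x : ℝ, x ≠ 0 → 0 < Ψ' x) :
    ∃ M : ℝ, 1 ≤ M ∧ ∀ x t : ℝ, 0 < t →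
      M⁻¹ ≤ (Ψ x - Ψ (x - t)) / (Ψ (x + t) - Ψ x) ∧
        (Ψ x - Ψ (x - t)) / (Ψ (x + t) - Ψ x) ≤ M := by
  have hk0 : 0 < k := zero_lt_one.trans hk
  have hκ0 : 0 < κ := zero_lt_one.trans hκ
  set J : Set ℝ := closedBall 0 (k + 1) \ ball 0 (1 / 2)
  have hJ0 : ∀ y ∈ J, y ≠ 0 := fun y hy hy0 => hy.2 (by simp [hy0])
  have hΨ'J : LogBoundedOn Ψ' J :=
    ((isCompact_closedBall 0 _).diff isOpen_ball).logBoundedOn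
      (hderivCont.mono hJ0) fun y hy => hderivPos y (hJ0 y hy)
  have hsmall := logBoundedOn_qsRatio_of_hasDerivAt hΨ'J fun y hy => hderiv y (hJ0 y hy)
  have hlarge : LogBoundedOn (qsRatio Ψ) (Icc (-k) k ×ˢ Icc (1 / 2) k) :=
    (isCompact_Icc.prod isCompact_Icc).logBoundedOn
      ((continuousOn_qsRatio hcont hmono.injective).mono fun p hp =>
        (show (0 : ℝ) < p.2 by linarith [hp.2.1]).ne')
      fun p hp => qsRatio_pos hmono (by linarith [hp.2.1])
  have hnormalized : LogBoundedOn (qsRatio Ψ) ({p | 0 < p.2} ∩ {p | 1 ≤ ‖p‖ ∧ ‖p‖ ≤ k}) :=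
    (hlarge.union hsmall).mono fun p ⟨hp, hp1, hpk⟩ =>
      (mem_Icc_prod_Icc_or_Icc_subset_closedBall_diff_ball hp hp1 hpk).imp id fun h => ⟨hp, h⟩
  have hinvariant (n : ℤ) (p : ℝ × ℝ) : qsRatio Ψ (k ^ n • p) = qsRatio Ψ p :=
    qsRatio_smul (apply_zpow_mul_eq hk0.ne' hκ0.ne' hfun n) (zpow_pos hκ0 n).ne' p
  obtain ⟨M, hM, hbound⟩ := hnormalized.of_zpow_smul_invariant hk
    (fun c hc p hp => mul_pos hc hp) (lt_irrefl (0 : ℝ)) hinvariant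
  exact ⟨M, hM, fun x t ht => hbound (x, t) ht⟩

/-- **Quasi-symmetry of Ψ** (core analytic step of the gluing lemma).
If `k, κ > 1` and `Ψ : ℝ → ℝ` is a continuous strictly increasing surjection with
`Ψ 0 = 0`, `Ψ 1 = 1`, `Ψ (-1) = -1`, satisfying `Ψ (k·x) = κ·Ψ x` for all `x`, and
`Ψ` is continuously differentiable on `ℝ \ {0}` with positive derivative there,
then `Ψ` is quasi-symmetric. -/
theorem quasisymmetry_of_functional_equation
    (k κ : ℝ) (hk : 1 < k) (hκ : 1 < κ)
    (Ψ : ℝ → ℝ) (hcont : Continuous Ψ) (hmono : StrictMono Ψ)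
    (hsurj : Function.Surjective Ψ)
    (h0 : Ψ 0 = 0) (h1 : Ψ 1 = 1) (hm1 : Ψ (-1) = -1)
    (hfun : ∀ x : ℝ, Ψ (k * x) = κ * Ψ x)
    (Ψ' : ℝ → ℝ)
    (hderiv : ∀ x : ℝ, x ≠ 0 → HasDerivAt Ψ (Ψ' x) x)
    (hderivCont : ContinuousOn Ψ' {x : ℝ | x ≠ 0})
    (hderivPos : ∀ x : ℝ, x ≠ 0 → 0 < Ψ' x) :
    ∃ M : ℝ, 1 ≤ M ∧ ∀ x t : ℝ, 0 < t →
      M⁻¹ ≤ (Ψ x - Ψ (x - t)) / (Ψ (x + t) - Ψ x) ∧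
        (Ψ x - Ψ (x - t)) / (Ψ (x + t) - Ψ x) ≤ M :=
  quasisymmetry_of_functional_equation_general k κ hk hκ Ψ hcont hmono hfun Ψ' hderiv hderivCont
    hderivPos
end

section
/- Let k > 1 and κ > 1 be real numbers and let Ψ : ℝ → ℝ be a continuous, strictly increasing surjection with Ψ(0) = 0, Ψ(1) = 1, Ψ(−1) = −1, satisfying Ψ(k·x) = κ·Ψ(x) for all x ∈ ℝ. Then for every t > 0, κ⁻¹ ≤ (Ψ(0) − Ψ(−t))/(Ψ(t) − Ψ(0)) ≤ κ, i.e. κ⁻¹ ≤ −Ψ(−t)/Ψ(t) ≤ κ. -/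
/-!
Iterating `Ψ (k * x) = κ * Ψ x` gives `Ψ (k ^ n * x) = κ ^ n * Ψ x` for all `n : ℤ`, and the
odd reflection `Φ x = -Ψ (-x)` satisfies the same equation. Writing `t = k ^ n * s` with
`s ∈ [1, k)`, the factor `κ ^ n` cancels from `Φ t / Ψ t`, and monotonicity puts both `Ψ s`
and `Φ s` in `[1, κ]`, so their ratio lies in `[κ⁻¹, κ]`.
-/

open Set

section FunctionalEquation

variable {α β : Type*}

theorem map_zpow_mul_of_map_mul [GroupWithZero α] [GroupWithZero β] {f : α → β} {k : α} {κ : β}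
    (hk : k ≠ 0) (hκ : κ ≠ 0) (hf : ∀ x, f (k * x) = κ * f x) (n : ℤ) (x : α) :
    f (k ^ n * x) = κ ^ n * f x := by
  have hf_inv (x : α) : f (k⁻¹ * x) = κ⁻¹ * f x := by
    rw [eq_inv_mul_iff_mul_eq₀ hκ, ← hf, mul_inv_cancel_left₀ hk]
  induction n using Int.induction_on generalizing x with
  | zero => simp
  | succ n ih => rw [zpow_add_one₀ hk, zpow_add_one₀ hκ, mul_assoc, ih, hf, mul_assoc]
  | pred n ih => rw [zpow_sub_one₀ hk, zpow_sub_one₀ hκ, mul_assoc, ih, hf_inv, mul_assoc]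

theorem map_mem_Icc_of_map_mul [MulOneClass α] [Preorder α] [MulOneClass β] [Preorder β]
    {f : α → β} {k : α} {κ : β} (hmono : Monotone f) (h1 : f 1 = 1)
    (hf : ∀ x, f (k * x) = κ * f x) {s : α} (hs : s ∈ Icc 1 k) : f s ∈ Icc 1 κ := by
  have hfk : f k = κ := by simpa [h1] using hf 1
  exact ⟨h1 ▸ hmono hs.1, hfk ▸ hmono hs.2⟩

end FunctionalEquation

section LinearOrderedField

variable {K : Type*} [Field K] [LinearOrder K] [IsStrictOrderedRing K]

theorem exists_eq_zpow_mul_mem_Ico {k t : K} [Archimedean K] (hk : 1 < k) (ht : 0 < t) :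
    ∃ n : ℤ, ∃ s ∈ Ico 1 k, t = k ^ n * s := by
  obtain ⟨n, hn_le, hlt⟩ := exists_mem_Ico_zpow ht hk
  have hkn : 0 < k ^ n := zpow_pos (by linarith) n
  refine ⟨n, t / k ^ n, ⟨(one_le_div hkn).2 hn_le, ?_⟩, by field_simp⟩
  rwa [div_lt_iff₀ hkn, mul_comm, ← zpow_add_one₀ (by positivity)]

theorem inv_le_div_and_div_le_of_mem_Icc {a b c : K} (ha : a ∈ Icc 1 c) (hb : b ∈ Icc 1 c) :
    c⁻¹ ≤ b / a ∧ b / a ≤ c := by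
  have ha0 : 0 < a := by linarith [ha.1]
  constructor
  · calc c⁻¹ ≤ a⁻¹ := inv_anti₀ ha0 ha.2
      _ = 1 / a := (one_div a).symm
      _ ≤ b / a := div_le_div_of_nonneg_right hb.1 ha0.le
  · calc b / a ≤ b := div_le_self (by linarith [hb.1]) ha.1
      _ ≤ c := hb.2

end LinearOrderedField

theorem quasisymmetry_ratio_at_zero_general (k κ : ℝ) (hk : 1 < k) (hκ : 1 < κ)
    (Ψ : ℝ → ℝ) (hmono : StrictMono Ψ)
    (h0 : Ψ 0 = 0) (h1 : Ψ 1 = 1) (hm1 : Ψ (-1) = -1)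
    (hfun : ∀ x : ℝ, Ψ (k * x) = κ * Ψ x) :
    ∀ t : ℝ, 0 < t →
      κ⁻¹ ≤ (Ψ 0 - Ψ (-t)) / (Ψ t - Ψ 0) ∧
        (Ψ 0 - Ψ (-t)) / (Ψ t - Ψ 0) ≤ κ := by
  intro t ht
  have hk0 : k ≠ 0 := by positivity
  have hκ0 : κ ≠ 0 := by positivity
  set Φ : ℝ → ℝ := fun x => -Ψ (-x)
  have hΦmono : Monotone Φ := fun x y hxy => neg_le_neg (hmono.monotone (neg_le_neg hxy))
  have hΦfun (x : ℝ) : Φ (k * x) = κ * Φ x := by simp only [Φ, ← mul_neg, hfun]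
  obtain ⟨n, s, hs, rfl⟩ := exists_eq_zpow_mul_mem_Ico hk ht
  have hratio : (Ψ 0 - Ψ (-(k ^ n * s))) / (Ψ (k ^ n * s) - Ψ 0) = Φ s / Ψ s := by
    rw [h0, sub_zero, zero_sub, ← mul_div_mul_left (Φ s) (Ψ s) (zpow_ne_zero n hκ0),
      ← map_zpow_mul_of_map_mul hk0 hκ0 hΦfun,
      ← map_zpow_mul_of_map_mul hk0 hκ0 hfun]
  rw [hratio]
  exact inv_le_div_and_div_le_of_mem_Icc
    (map_mem_Icc_of_map_mul hmono.monotone h1 hfun (Ico_subset_Icc_self hs))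
    (map_mem_Icc_of_map_mul hΦmono (by simp [Φ, hm1]) hΦfun (Ico_subset_Icc_self hs))

/-- Step (iv) (the case `x = 0`) of the quasi-symmetry proof in the gluing lemma:
`κ⁻¹ ≤ (Ψ 0 - Ψ (-t)) / (Ψ t - Ψ 0) ≤ κ` for every `t > 0`. -/
theorem quasisymmetry_ratio_at_zero (k κ : ℝ) (hk : 1 < k) (hκ : 1 < κ)
    (Ψ : ℝ → ℝ) (hcont : Continuous Ψ) (hmono : StrictMono Ψ)
    (hsurj : Function.Surjective Ψ)
    (h0 : Ψ 0 = 0) (h1 : Ψ 1 = 1) (hm1 : Ψ (-1) = -1)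
    (hfun : ∀ x : ℝ, Ψ (k * x) = κ * Ψ x) :
    ∀ t : ℝ, 0 < t →
      κ⁻¹ ≤ (Ψ 0 - Ψ (-t)) / (Ψ t - Ψ 0) ∧
        (Ψ 0 - Ψ (-t)) / (Ψ t - Ψ 0) ≤ κ :=
  quasisymmetry_ratio_at_zero_general k κ hk hκ Ψ hmono h0 h1 hm1 hfun
end

section
/- Let k > 1 and κ > 1 be real numbers and let Ψ : ℝ → ℝ be a continuous, strictly increasing surjection with Ψ(0) = 0, Ψ(1) = 1, Ψ(−1) = −1, satisfying Ψ(k·x) = κ·Ψ(x) for all x ∈ ℝ. Set m̂₂ = inf{Ψ(x) − Ψ(x − 1/2) : 1 ≤ x ≤ k}. Then m̂₂ > 0, Ψ(2) > 0, and for every x ∈ [1, k] and every t with 1/2 < t < x, (Ψ(x) − Ψ(x−t))/(Ψ(x+t) − Ψ(x)) ≥ m̂₂/(κ·Ψ(2)). -/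
/-- Lower bound in step (ii) of the quasi-symmetry proof in the gluing lemma:
with `m̂₂ = inf {Ψ x - Ψ (x - 1/2) : 1 ≤ x ≤ k}` one has `m̂₂ > 0`, `Ψ 2 > 0` and
`Q x t ≥ m̂₂ / (κ · Ψ 2)` for `x ∈ [1, k]` and `1/2 < t < x`. -/
theorem quasisymmetry_ratio_lower_medium_t (k κ : ℝ) (hk : 1 < k) (hκ : 1 < κ)
    (Ψ : ℝ → ℝ) (hcont : Continuous Ψ) (hmono : StrictMono Ψ)
    (hsurj : Function.Surjective Ψ)
    (h0 : Ψ 0 = 0) (h1 : Ψ 1 = 1) (hm1 : Ψ (-1) = -1)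
    (hfun : ∀ x : ℝ, Ψ (k * x) = κ * Ψ x) :
    0 < sInf ((fun x => Ψ x - Ψ (x - 1 / 2)) '' Set.Icc (1 : ℝ) k) ∧
    0 < Ψ 2 ∧
    ∀ x ∈ Set.Icc (1 : ℝ) k, ∀ t : ℝ, 1 / 2 < t → t < x →
      sInf ((fun x => Ψ x - Ψ (x - 1 / 2)) '' Set.Icc (1 : ℝ) k) / (κ * Ψ 2)
        ≤ (Ψ x - Ψ (x - t)) / (Ψ (x + t) - Ψ x) := by
  set f : ℝ → ℝ := fun x => Ψ x - Ψ (x - 1 / 2) with hf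
  have hfc : ContinuousOn f (Set.Icc (1 : ℝ) k) :=
    (hcont.sub (hcont.comp (continuous_id.sub continuous_const))).continuousOn
  have hne : (Set.Icc (1 : ℝ) k).Nonempty := ⟨1, le_refl 1, hk.le⟩
  have hcompact : IsCompact (Set.Icc (1 : ℝ) k) := isCompact_Icc
  obtain ⟨x₀, hx₀, hmin⟩ := hcompact.exists_isMinOn hne hfc
  have hInf : sInf (f '' Set.Icc (1 : ℝ) k) = f x₀ := by
    apply le_antisymm
    · exact csInf_le ((hcompact.image_of_continuousOn hfc).bddBelow) ⟨x₀, hx₀, rfl⟩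
    · apply le_csInf (hne.image f)
      rintro y ⟨z, hz, rfl⟩
      exact hmin hz
  have hfx₀ : 0 < f x₀ := by
    have : x₀ - 1 / 2 < x₀ := by linarith
    simpa [hf] using sub_pos.mpr (hmono this)
  have hInfpos : 0 < sInf (f '' Set.Icc (1 : ℝ) k) := hInf ▸ hfx₀
  have hΨ2 : 0 < Ψ 2 := by
    have := hmono (show (0:ℝ) < 2 by norm_num)
    linarith [h0]
  refine ⟨hInfpos, hΨ2, ?_⟩
  rintro x ⟨hx1, hxk⟩ t ht2 htx
  have hd : 0 < Ψ (x + t) - Ψ x := sub_pos.mpr (hmono (by linarith))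
  have hnum : sInf (f '' Set.Icc (1 : ℝ) k) ≤ Ψ x - Ψ (x - t) := by
    have h1' : sInf (f '' Set.Icc (1 : ℝ) k) ≤ f x := by
      rw [hInf]; exact hmin ⟨hx1, hxk⟩
    have h2' : f x ≤ Ψ x - Ψ (x - t) := by
      have : Ψ (x - t) ≤ Ψ (x - 1 / 2) := (hmono.le_iff_le).mpr (by linarith)
      simp only [hf]; linarith
    linarith
  have hden : Ψ (x + t) - Ψ x ≤ κ * Ψ 2 := by
    have h2k : Ψ (x + t) ≤ Ψ (k * 2) := (hmono.le_iff_le).mpr (by nlinarith)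
    have hx0 : 0 < Ψ x := by
      have := hmono (show (0:ℝ) < x by linarith)
      linarith [h0]
    rw [hfun 2] at h2k
    linarith
  exact div_le_div₀ (le_trans hInfpos.le hnum) hnum hd hden
end

section
/- Let k > 1 and κ > 1 be real numbers and let Ψ : ℝ → ℝ be a continuous, strictly increasing surjection with Ψ(0) = 0, Ψ(1) = 1, Ψ(−1) = −1, satisfying Ψ(k·x) = κ·Ψ(x) for all x ∈ ℝ. Then for every integer m ≥ 2, every x ∈ [1, k], and every t with k^m ≤ t ≤ k^{m+1}, one has (Ψ(x) − Ψ(x−t))/(Ψ(x+t) − Ψ(x)) ≤ (1 + κ^m)/(κ^{m−1} − 1). -/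
/-- The explicit large-`t` estimate in step (iii) of the quasi-symmetry proof of the
gluing lemma: for `m ≥ 2`, `x ∈ [1, k]` and `k^m ≤ t ≤ k^(m+1)`,
`Q x t ≤ (1 + κ^m) / (κ^(m-1) - 1)`. -/
theorem quasisymmetry_ratio_large_t (k κ : ℝ) (hk : 1 < k) (hκ : 1 < κ)
    (Ψ : ℝ → ℝ) (hcont : Continuous Ψ) (hmono : StrictMono Ψ)
    (hsurj : Function.Surjective Ψ)
    (h0 : Ψ 0 = 0) (h1 : Ψ 1 = 1) (hm1 : Ψ (-1) = -1)
    (hfun : ∀ x : ℝ, Ψ (k * x) = κ * Ψ x) :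
    ∀ m : ℕ, 2 ≤ m → ∀ x ∈ Set.Icc (1 : ℝ) k, ∀ t : ℝ,
      k ^ m ≤ t → t ≤ k ^ (m + 1) →
      (Ψ x - Ψ (x - t)) / (Ψ (x + t) - Ψ x)
        ≤ (1 + κ ^ m) / (κ ^ (m - 1) - 1) := by
  have hpow : ∀ n : ℕ, Ψ (k ^ n) = κ ^ n := by
    intro n
    induction n with
    | zero => simpa using h1
    | succ n ih => rw [pow_succ, pow_succ, mul_comm (k ^ n) k, hfun, ih, mul_comm]
  have hnegpow : ∀ n : ℕ, Ψ (-(k ^ n)) = -(κ ^ n) := by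
    intro n
    induction n with
    | zero => simpa using hm1
    | succ n ih =>
        rw [pow_succ, pow_succ, mul_comm (k ^ n) k, ← mul_neg, hfun, ih, mul_neg, mul_comm]
  intro m hm x hx t ht1 ht2
  obtain ⟨hx1, hxk⟩ := hx
  have hκ0 : (0 : ℝ) < κ := lt_trans one_pos hκ
  -- numerator bound
  have hxt : -(k ^ (m + 1)) ≤ x - t := by nlinarith
  have hnum : Ψ x - Ψ (x - t) ≤ κ + κ ^ (m + 1) := by
    have h1' : Ψ x ≤ κ := by
      calc Ψ x ≤ Ψ k := hmono.monotone hxk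
        _ = κ := by have := hpow 1; simpa using this
    have h2' : -(κ ^ (m + 1)) ≤ Ψ (x - t) := by
      calc -(κ ^ (m + 1)) = Ψ (-(k ^ (m + 1))) := (hnegpow (m + 1)).symm
        _ ≤ Ψ (x - t) := hmono.monotone hxt
    linarith
  -- denominator bound
  have hden : κ ^ m - κ ≤ Ψ (x + t) - Ψ x := by
    have h1' : Ψ x ≤ κ := by
      calc Ψ x ≤ Ψ k := hmono.monotone hxk
        _ = κ := by have := hpow 1; simpa using this
    have h2' : κ ^ m ≤ Ψ (x + t) := by
      calc κ ^ m = Ψ (k ^ m) := (hpow m).symm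
        _ ≤ Ψ (x + t) := hmono.monotone (by linarith)
    linarith
  have hmul : κ * κ ^ (m - 1) = κ ^ m := by
    rw [← pow_succ']; congr 1; omega
  have hκm1 : (1 : ℝ) < κ ^ (m - 1) := one_lt_pow₀ hκ (by omega)
  have hdpos : 0 < κ * (κ ^ (m - 1) - 1) := by
    apply mul_pos hκ0; linarith
  have hden' : κ * (κ ^ (m - 1) - 1) ≤ Ψ (x + t) - Ψ x := by
    rw [mul_sub, hmul, mul_one]; exact hden
  have hnum' : Ψ x - Ψ (x - t) ≤ κ * (1 + κ ^ m) := by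
    rw [mul_add, mul_one, ← pow_succ']; exact hnum
  calc (Ψ x - Ψ (x - t)) / (Ψ (x + t) - Ψ x)
      ≤ (κ * (1 + κ ^ m)) / (κ * (κ ^ (m - 1) - 1)) := by
        apply div_le_div₀ (by positivity) hnum' hdpos hden'
    _ = (1 + κ ^ m) / (κ ^ (m - 1) - 1) := mul_div_mul_left _ _ (ne_of_gt hκ0)
end

section
/- Let k > 1 and κ > 1 be real numbers and let Ψ : ℝ → ℝ be a continuous, strictly increasing surjection with Ψ(0) = 0, Ψ(1) = 1, Ψ(−1) = −1, satisfying Ψ(k·x) = κ·Ψ(x) for all x ∈ ℝ. Then for every ε > 0 there exists T > 0 such that for every x ∈ [1, k] and every t ≥ T, (Ψ(x) − Ψ(x−t))/(Ψ(x+t) − Ψ(x)) ≤ κ + ε. In other words, the quasi-symmetry ratio Q(x,t) is at most κ asymptotically as t → ∞, uniformly for x ∈ [1, k]. -/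
/-- Limiting conclusion of step (iii) of the quasi-symmetry proof in the gluing
lemma: the quasi-symmetry ratio is at most `κ` asymptotically as `t → ∞`,
uniformly for `x ∈ [1, k]`. -/
theorem quasisymmetry_ratio_asymptotic (k κ : ℝ) (hk : 1 < k) (hκ : 1 < κ)
    (Ψ : ℝ → ℝ) (hcont : Continuous Ψ) (hmono : StrictMono Ψ)
    (hsurj : Function.Surjective Ψ)
    (h0 : Ψ 0 = 0) (h1 : Ψ 1 = 1) (hm1 : Ψ (-1) = -1)
    (hfun : ∀ x : ℝ, Ψ (k * x) = κ * Ψ x) :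
    ∀ ε : ℝ, 0 < ε → ∃ T : ℝ, 0 < T ∧
      ∀ x ∈ Set.Icc (1 : ℝ) k, ∀ t : ℝ, T ≤ t →
        (Ψ x - Ψ (x - t)) / (Ψ (x + t) - Ψ x) ≤ κ + ε := by
  intro ε hε
  have hk0 : (0:ℝ) < k := lt_trans one_pos hk
  have hκ0 : (0:ℝ) < κ := lt_trans one_pos hκ
  -- Ψ(k^n) = κ^n and Ψ(-(k^n)) = -κ^n
  have hpow : ∀ n : ℕ, Ψ (k ^ n) = κ ^ n := by
    intro n
    induction n with
    | zero => simpa using h1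
    | succ n ih =>
        have := hfun (k ^ n)
        rw [ih] at this
        calc Ψ (k ^ (n+1)) = Ψ (k * k ^ n) := by ring_nf
          _ = κ ^ (n+1) := by rw [this]; ring
  have hpowneg : ∀ n : ℕ, Ψ (-(k ^ n)) = -(κ ^ n) := by
    intro n
    induction n with
    | zero => simpa using hm1
    | succ n ih =>
        have := hfun (-(k ^ n))
        rw [ih] at this
        calc Ψ (-(k ^ (n+1))) = Ψ (k * -(k ^ n)) := by ring_nf
          _ = -(κ ^ (n+1)) := by rw [this]; ring
  have hΨk : Ψ k = κ := by simpa using hpow 1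
  -- choose m₀ with κ^m₀ ≥ C
  set C : ℝ := (κ + κ ^ 2 + ε * κ) / ε with hC
  have hCκ : κ < C := by
    rw [hC, lt_div_iff₀ hε]
    nlinarith [sq_nonneg κ]
  obtain ⟨m₀, hm₀⟩ := pow_unbounded_of_one_lt C hκ
  refine ⟨k ^ m₀, pow_pos hk0 m₀, ?_⟩
  rintro x ⟨hx1, hxk⟩ t ht
  have ht0 : 0 < t := lt_of_lt_of_le (pow_pos hk0 m₀) ht
  -- choose m with k^m ≤ t < k^(m+1)
  set L : ℝ := Real.logb k t with hL
  set m : ℕ := ⌊L⌋₊ with hm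
  have hkne : k ≠ 1 := ne_of_gt hk
  have hLm₀ : (m₀ : ℝ) ≤ L := by
    rw [hL, Real.le_logb_iff_rpow_le hk ht0]
    rw [Real.rpow_natCast]
    exact ht
  have hmm₀ : m₀ ≤ m := Nat.le_floor hLm₀
  have hL0 : 0 ≤ L := le_trans (Nat.cast_nonneg m₀) hLm₀
  have hmL : (m : ℝ) ≤ L := Nat.floor_le hL0
  have hLm1 : L < (m : ℝ) + 1 := Nat.lt_floor_add_one L
  have hkLt : k ^ L = t := Real.rpow_logb hk0 hkne ht0
  have h1t : (k : ℝ) ^ m ≤ t := by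
    rw [← hkLt, ← Real.rpow_natCast k m]
    exact Real.rpow_le_rpow_left_iff hk |>.mpr hmL
  have h2t : t < k ^ (m + 1) := by
    rw [← hkLt, ← Real.rpow_natCast k (m + 1)]
    refine Real.rpow_lt_rpow_left_iff hk |>.mpr ?_
    push_cast
    exact hLm1
  -- κ^m ≥ C
  have hκm : C ≤ κ ^ m :=
    le_trans (le_of_lt hm₀) (pow_le_pow_right₀ hκ.le hmm₀)
  have hκmκ : κ < κ ^ m := lt_of_lt_of_le hCκ hκm
  -- numerator bound
  have hΨx_le : Ψ x ≤ κ := hΨk ▸ hmono.monotone hxk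
  have hxlow : -(k ^ (m+1)) ≤ x - t := by nlinarith
  have hnum : Ψ x - Ψ (x - t) ≤ κ + κ ^ (m+1) := by
    have := hmono.monotone hxlow
    rw [hpowneg (m+1)] at this
    linarith
  -- denominator bound
  have hxthigh : (k:ℝ) ^ m ≤ x + t := by linarith
  have hden : κ ^ m - κ ≤ Ψ (x + t) - Ψ x := by
    have := hmono.monotone hxthigh
    rw [hpow m] at this
    linarith
  have hdenpos : (0:ℝ) < κ ^ m - κ := by linarith
  have hnum0 : 0 ≤ κ + κ ^ (m+1) := by positivity
  have step1 : (Ψ x - Ψ (x - t)) / (Ψ (x + t) - Ψ x) ≤ (κ + κ ^ (m+1)) / (κ ^ m - κ) :=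
    div_le_div₀ hnum0 hnum hdenpos hden
  refine le_trans step1 ?_
  rw [div_le_iff₀ hdenpos]
  have hεκm : κ + κ ^ 2 + ε * κ ≤ ε * κ ^ m := by
    have := (div_le_iff₀ hε).mp hκm
    linarith
  have : κ ^ (m+1) = κ * κ ^ m := by ring
  nlinarith [pow_pos hκ0 m]
end

section
/- Let k > 1 and κ > 1 be real numbers and let Ψ : ℝ → ℝ be a continuous, strictly increasing surjection with Ψ(0) = 0, Ψ(1) = 1, Ψ(−1) = −1, satisfying Ψ(k·x) = κ·Ψ(x) for all x ∈ ℝ. Then there exist constants 0 < m₃ ≤ M₃ < ∞ such that for every x ∈ [1, k] and every t ≥ 1/2, m₃ ≤ (Ψ(x) − Ψ(x−t))/(Ψ(x+t) − Ψ(x)) ≤ M₃. -/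
/-- Steps (ii) and (iii) combined: for `x ∈ [1, k]` and `t ≥ 1/2` the
quasi-symmetry ratio of `Ψ` is bounded between positive constants. -/
theorem quasisymmetry_ratio_bounded_t_ge_half (k κ : ℝ) (hk : 1 < k) (hκ : 1 < κ)
    (Ψ : ℝ → ℝ) (hcont : Continuous Ψ) (hmono : StrictMono Ψ)
    (hsurj : Function.Surjective Ψ)
    (h0 : Ψ 0 = 0) (h1 : Ψ 1 = 1) (hm1 : Ψ (-1) = -1)
    (hfun : ∀ x : ℝ, Ψ (k * x) = κ * Ψ x) :
    ∃ m₃ M₃ : ℝ, 0 < m₃ ∧ m₃ ≤ M₃ ∧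
      ∀ x ∈ Set.Icc (1 : ℝ) k, ∀ t : ℝ, 1 / 2 ≤ t →
        m₃ ≤ (Ψ x - Ψ (x - t)) / (Ψ (x + t) - Ψ x) ∧
          (Ψ x - Ψ (x - t)) / (Ψ (x + t) - Ψ x) ≤ M₃ := by
  have hk0 : (0:ℝ) < k := lt_trans one_pos hk
  have hκ0 : (0:ℝ) < κ := lt_trans one_pos hκ
  -- iterated functional equation
  have hpow : ∀ n : ℕ, ∀ x : ℝ, Ψ (k ^ n * x) = κ ^ n * Ψ x := by
    intro n
    induction n with
    | zero => intro x; simp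
    | succ n ih =>
      intro x
      have h : k ^ (n+1) * x = k * (k ^ n * x) := by ring
      rw [h, hfun, ih]; ring
  have hΨpow : ∀ n : ℕ, Ψ (k ^ n) = κ ^ n := by
    intro n; have := hpow n 1; simpa [h1] using this
  have hΨpowneg : ∀ n : ℕ, Ψ (-(k ^ n)) = -(κ ^ n) := by
    intro n; have := hpow n (-1); rw [mul_neg_one, hm1] at this; simpa using this
  have hΨk : Ψ k = κ := by have := hfun 1; simpa [h1] using this
  -- Lemma A : comparability of Ψ y and -Ψ(-y) for y ≥ 1
  have hA : ∀ y : ℝ, 1 ≤ y → Ψ y ≤ κ * (-Ψ (-y)) ∧ -Ψ (-y) ≤ κ * Ψ y := by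
    intro y hy
    obtain ⟨n, hn1, hn2⟩ := exists_nat_pow_near hy hk
    have e1 : κ ^ n ≤ Ψ y := by rw [← hΨpow n]; exact hmono.monotone hn1
    have e2 : Ψ y ≤ κ ^ (n+1) := by
      rw [← hΨpow (n+1)]; exact (hmono hn2).le
    have e3 : κ ^ n ≤ -Ψ (-y) := by
      have : Ψ (-y) ≤ Ψ (-(k ^ n)) := hmono.monotone (by linarith)
      rw [hΨpowneg n] at this; linarith
    have e4 : -Ψ (-y) ≤ κ ^ (n+1) := by
      have : Ψ (-(k ^ (n+1))) ≤ Ψ (-y) := hmono.monotone (by linarith)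
      rw [hΨpowneg (n+1)] at this; linarith
    constructor
    · calc Ψ y ≤ κ ^ (n+1) := e2
        _ = κ * κ ^ n := by ring
        _ ≤ κ * (-Ψ (-y)) := by nlinarith
    · calc -Ψ (-y) ≤ κ ^ (n+1) := e4
        _ = κ * κ ^ n := by ring
        _ ≤ κ * Ψ y := by nlinarith
  -- choose m with 3 ≤ k ^ m
  obtain ⟨m, hm⟩ := pow_unbounded_of_one_lt (3:ℝ) hk
  -- choose n₀ with 2 ≤ κ ^ n₀
  obtain ⟨n₀, hn₀⟩ := pow_unbounded_of_one_lt (2:ℝ) hκ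
  set T : ℝ := max (2 * k) (k ^ (n₀ + 1)) with hT
  have hT2k : 2 * k ≤ T := le_max_left _ _
  have hTk : k ^ (n₀ + 1) ≤ T := le_max_right _ _
  have hThalf : (1:ℝ)/2 ≤ T := by
    have : (2:ℝ) ≤ 2 * k := by linarith
    linarith
  -- the compact region
  set S : Set (ℝ × ℝ) := Set.Icc (1:ℝ) k ×ˢ Set.Icc ((1:ℝ)/2) T with hS
  have hScomp : IsCompact S := isCompact_Icc.prod isCompact_Icc
  have hSne : S.Nonempty := ⟨(1, 1/2), by
    constructor
    · exact ⟨le_refl _, hk.le⟩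
    · exact ⟨le_refl _, hThalf⟩⟩
  set f : ℝ × ℝ → ℝ := fun p => (Ψ p.1 - Ψ (p.1 - p.2)) / (Ψ (p.1 + p.2) - Ψ p.1) with hf
  have hden : ∀ p ∈ S, 0 < Ψ (p.1 + p.2) - Ψ p.1 := by
    intro p hp
    have hpt : (1:ℝ)/2 ≤ p.2 := hp.2.1
    have : p.1 < p.1 + p.2 := by linarith
    have := hmono this; linarith
  have hnum : ∀ p ∈ S, 0 < Ψ p.1 - Ψ (p.1 - p.2) := by
    intro p hp
    have hpt : (1:ℝ)/2 ≤ p.2 := hp.2.1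
    have : p.1 - p.2 < p.1 := by linarith
    have := hmono this; linarith
  have hfc : ContinuousOn f S := by
    apply ContinuousOn.div
    · exact (hcont.comp continuous_fst).sub
        (hcont.comp (continuous_fst.sub continuous_snd)) |>.continuousOn
    · exact (hcont.comp (continuous_fst.add continuous_snd)).sub
        (hcont.comp continuous_fst) |>.continuousOn
    · intro p hp; exact ne_of_gt (hden p hp)
  obtain ⟨pmin, hpminS, hpmin⟩ := hScomp.exists_isMinOn hSne hfc
  obtain ⟨pmax, hpmaxS, hpmax⟩ := hScomp.exists_isMaxOn hSne hfc
  have hfmin_pos : 0 < f pmin := div_pos (hnum _ hpminS) (hden _ hpminS)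
  -- the constants
  refine ⟨min (f pmin) (κ ^ (m+1))⁻¹, max (f pmax) (4 * κ), ?_, ?_, ?_⟩
  · exact lt_min hfmin_pos (inv_pos.mpr (pow_pos hκ0 _))
  · calc min (f pmin) (κ ^ (m+1))⁻¹ ≤ f pmin := min_le_left _ _
      _ ≤ f pmax := hpmin hpmaxS
      _ ≤ max (f pmax) (4 * κ) := le_max_left _ _
  intro x hx t ht
  obtain ⟨hx1, hxk⟩ := hx
  have hΨx1 : 1 ≤ Ψ x := by rw [← h1]; exact hmono.monotone hx1
  have hΨxκ : Ψ x ≤ κ := by rw [← hΨk]; exact hmono.monotone hxk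
  by_cases hcase : t ≤ T
  · -- compact case
    have hpS : (x, t) ∈ S := ⟨⟨hx1, hxk⟩, ⟨ht, hcase⟩⟩
    constructor
    · exact le_trans (min_le_left _ _) (hpmin hpS)
    · exact le_trans (hpmax hpS) (le_max_left _ _)
  · -- large t case
    push_neg at hcase
    have ht2k : 2 * k ≤ t := le_trans hT2k hcase.le
    have htT : k ^ (n₀ + 1) ≤ t := le_trans hTk hcase.le
    set u : ℝ := t - x with hu
    have hu1 : 1 ≤ u := by have : k ≤ u := by simp only [hu]; linarith
                           linarith
    have hΨu1 : 1 ≤ Ψ u := by rw [← h1]; exact hmono.monotone hu1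
    have hxmt : x - t = -u := by ring
    obtain ⟨hA1, hA2⟩ := hA u hu1
    -- denominator positive
    have hDpos : 0 < Ψ (x + t) - Ψ x := by
      have : x < x + t := by linarith
      have := hmono this; linarith
    -- Ψ(x+t) ≤ κ^m Ψ u
    have hDup : Ψ (x + t) ≤ κ ^ m * Ψ u := by
      have h3 : x + t ≤ 3 * u := by simp only [hu]; linarith
      have hku : 3 * u ≤ k ^ m * u := by nlinarith
      have : Ψ (x + t) ≤ Ψ (k ^ m * u) := hmono.monotone (by linarith)
      rwa [hpow m u] at this
    -- Ψ u ≤ Ψ (x + t)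
    have hΨuxt : Ψ u ≤ Ψ (x + t) := hmono.monotone (by simp only [hu]; linarith)
    -- Ψ (x+t) ≥ 2κ
    have hΨxt2κ : 2 * κ ≤ Ψ (x + t) := by
      have : k ^ (n₀ + 1) ≤ x + t := by linarith
      have h := hmono.monotone this
      rw [hΨpow (n₀ + 1)] at h
      have : 2 * κ ≤ κ ^ (n₀ + 1) := by
        have : κ ^ (n₀ + 1) = κ ^ n₀ * κ := by ring
        nlinarith
      linarith
    have hD2 : Ψ u / 2 ≤ Ψ (x + t) - Ψ x := by linarith
    rw [hxmt]
    have hκm1 : (0:ℝ) < κ ^ (m+1) := pow_pos hκ0 _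
    have hκm : (0:ℝ) < κ ^ m := pow_pos hκ0 _
    constructor
    · -- lower bound
      refine le_trans (min_le_right _ _) ?_
      rw [le_div_iff₀ hDpos, inv_mul_le_iff₀ hκm1]
      have s1 : -Ψ (-u) ≤ Ψ x - Ψ (-u) := by linarith
      have s2 : κ * -Ψ (-u) ≤ κ * (Ψ x - Ψ (-u)) :=
        mul_le_mul_of_nonneg_left s1 hκ0.le
      have s2' : Ψ u ≤ κ * (Ψ x - Ψ (-u)) := le_trans hA1 s2
      have s3 : κ ^ m * Ψ u ≤ κ ^ m * (κ * (Ψ x - Ψ (-u))) :=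
        mul_le_mul_of_nonneg_left s2' hκm.le
      have e : κ ^ m * (κ * (Ψ x - Ψ (-u))) = κ ^ (m+1) * (Ψ x - Ψ (-u)) := by ring
      linarith [hDup, hΨx1]
    · -- upper bound
      refine le_trans ?_ (le_max_right _ _)
      rw [div_le_iff₀ hDpos]
      have t1 : κ * 1 ≤ κ * Ψ u := mul_le_mul_of_nonneg_left hΨu1 hκ0.le
      have t2 : Ψ x - Ψ (-u) ≤ 2 * (κ * Ψ u) := by linarith
      have t3 : (4 * κ) * (Ψ u / 2) ≤ (4 * κ) * (Ψ (x + t) - Ψ x) :=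
        mul_le_mul_of_nonneg_left hD2 (by positivity)
      have e2 : (4 * κ) * (Ψ u / 2) = 2 * (κ * Ψ u) := by ring
      linarith
end

section
/- Consider the middle-thirds construction on [−1, 1]: the unique level-0 interval is [−1, 1], and each level-k closed interval I with midpoint c and length L has exactly two level-(k+1) children, [c − L/2, c − L/6] and [c + L/6, c + L/2] (so every level-k interval has length 2·3^{−k}). For a level-k interval I with midpoint c and length L, let C(I) be the circle in ℂ (equivalently, the sphere in ℝ²) with center c and radius (5/6)·L. Then for any two distinct intervals I ≠ J of the construction (at any, possibly different, levels ≥ 0), the circles C(I) and C(J) are disjoint. -/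
/-- `IsMidCenter k c` says that `c` is the midpoint of a level-`k` interval of the
middle-thirds construction on `[-1, 1]`: the level-0 interval is `[-1, 1]` (midpoint
`0`, length `2`), and each level-`k` interval with midpoint `c'` and length
`L = 2 / 3^k` has the two level-`(k+1)` children with midpoints `c' ± L/3`
(length `L/3 = 2 / 3^(k+1)`). -/
def IsMidCenter : ℕ → ℝ → Prop
  | 0, c => c = 0
  | (k + 1), c => ∃ c' : ℝ, IsMidCenter k c' ∧
      (c = c' - 2 / 3 ^ (k + 1) ∨ c = c' + 2 / 3 ^ (k + 1))

lemma midBound : ∀ (k : ℕ) (c : ℝ), IsMidCenter k c → |c| ≤ 1 - 1 / 3 ^ k := by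
  intro k
  induction k with
  | zero =>
    intro c h
    have hc : c = 0 := h
    simp [hc]
  | succ k ih =>
    intro c h
    obtain ⟨d, hd, hc⟩ := h
    have hb := ih d hd
    have hp : (0:ℝ) < 1 / 3 ^ k := by positivity
    rw [abs_le] at hb ⊢
    obtain ⟨hb1, hb2⟩ := hb
    rcases hc with rfl | rfl <;> constructor <;> (ring_nf at hp hb1 hb2 ⊢; linarith)

lemma midTop : ∀ (k : ℕ) (c : ℝ), IsMidCenter (k + 1) c →
    ∃ d : ℝ, IsMidCenter k d ∧ (c = d / 3 - 2 / 3 ∨ c = d / 3 + 2 / 3) := by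
  intro k
  induction k with
  | zero =>
    intro c h
    obtain ⟨d, hd, hc⟩ := h
    have hd0 : d = 0 := hd
    subst hd0
    refine ⟨0, rfl, ?_⟩
    rcases hc with rfl | rfl
    · left; norm_num
    · right; norm_num
  | succ k ih =>
    intro c h
    obtain ⟨c₁, hc₁, hc⟩ := h
    obtain ⟨d, hd, hsplit⟩ := ih c₁ hc₁
    have e : (3:ℝ) ^ (k + 1 + 1) = 3 ^ (k + 1) * 3 := pow_succ 3 (k + 1)
    rcases hc with rfl | rfl <;> rcases hsplit with rfl | rfl
    · exact ⟨d - 2 / 3 ^ (k + 1), ⟨d, hd, Or.inl rfl⟩, Or.inl (by rw [e]; ring)⟩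
    · exact ⟨d - 2 / 3 ^ (k + 1), ⟨d, hd, Or.inl rfl⟩, Or.inr (by rw [e]; ring)⟩
    · exact ⟨d + 2 / 3 ^ (k + 1), ⟨d, hd, Or.inr rfl⟩, Or.inl (by rw [e]; ring)⟩
    · exact ⟨d + 2 / 3 ^ (k + 1), ⟨d, hd, Or.inr rfl⟩, Or.inr (by rw [e]; ring)⟩

lemma midClaim : ∀ (k k' : ℕ) (c c' : ℝ), k ≤ k' → IsMidCenter k c → IsMidCenter k' c' →
    |c - c'| ≤ 1 / 3 ^ k - 1 / 3 ^ k' ∨ 2 / 3 ^ k + 2 / 3 ^ k' ≤ |c - c'| := by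
  intro k
  induction k with
  | zero =>
    intro k' c c' _ hc hc'
    have hc0 : c = 0 := hc
    subst hc0
    left
    have hb := midBound k' c' hc'
    rw [zero_sub, abs_neg]
    simpa using hb
  | succ k ih =>
    intro k' c c' hkk hc hc'
    obtain ⟨k'', rfl⟩ : ∃ m, k' = m + 1 := ⟨k' - 1, by omega⟩
    have hk2 : k ≤ k'' := by omega
    obtain ⟨d, hd, hsd⟩ := midTop k c hc
    obtain ⟨d', hd', hsd'⟩ := midTop k'' c' hc'
    have hbd := midBound k d hd
    have hbd' := midBound k'' d' hd'
    have IH := ih k'' d d' hk2 hd hd'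
    have e1 : (1:ℝ) / 3 ^ (k + 1) = (1 / 3 ^ k) / 3 := by rw [pow_succ]; ring
    have e2 : (1:ℝ) / 3 ^ (k'' + 1) = (1 / 3 ^ k'') / 3 := by rw [pow_succ]; ring
    have b1 : (1:ℝ) / 3 ^ (k + 1) ≤ 1 / 3 := by
      apply one_div_le_one_div_of_le (by norm_num)
      calc (3:ℝ) = 3 ^ 1 := (pow_one 3).symm
        _ ≤ 3 ^ (k + 1) := pow_le_pow_right₀ (by norm_num) (by omega)
    have b2 : (1:ℝ) / 3 ^ (k'' + 1) ≤ 1 / 3 := by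
      apply one_div_le_one_div_of_le (by norm_num)
      calc (3:ℝ) = 3 ^ 1 := (pow_one 3).symm
        _ ≤ 3 ^ (k'' + 1) := pow_le_pow_right₀ (by norm_num) (by omega)
    rcases hsd with rfl | rfl <;> rcases hsd' with rfl | rfl
    · -- same sign (both minus)
      have habs : |d / 3 - 2 / 3 - (d' / 3 - 2 / 3)| = |d - d'| / 3 := by
        rw [show d / 3 - 2 / 3 - (d' / 3 - 2 / 3) = (d - d') / 3 by ring, abs_div]
        norm_num
      rw [habs]
      rcases IH with h | h
      · left; ring_nf at h ⊢; linarith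
      · right; ring_nf at h ⊢; linarith
    · -- opposite signs : c = d/3 - 2/3, c' = d'/3 + 2/3
      right
      have t1 := neg_le_abs (d / 3 - 2 / 3 - (d' / 3 + 2 / 3))
      have t2 := le_abs_self d
      have t3 := neg_le_abs d'
      ring_nf at t1 hbd hbd' b1 b2 ⊢; linarith
    · -- opposite signs : c = d/3 + 2/3, c' = d'/3 - 2/3
      right
      have t1 := le_abs_self (d / 3 + 2 / 3 - (d' / 3 - 2 / 3))
      have t2 := neg_le_abs d
      have t3 := le_abs_self d'
      ring_nf at t1 hbd hbd' b1 b2 ⊢; linarith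
    · -- same sign (both plus)
      have habs : |d / 3 + 2 / 3 - (d' / 3 + 2 / 3)| = |d - d'| / 3 := by
        rw [show d / 3 + 2 / 3 - (d' / 3 + 2 / 3) = (d - d') / 3 by ring, abs_div]
        norm_num
      rw [habs]
      rcases IH with h | h
      · left; ring_nf at h ⊢; linarith
      · right; ring_nf at h ⊢; linarith

lemma circles_disjoint_ordered
    (k k' : ℕ) (c c' : ℝ) (hkk : k ≤ k')
    (hc : IsMidCenter k c) (hc' : IsMidCenter k' c')
    (hne : ¬(k = k' ∧ c = c')) :
    Disjoint (Metric.sphere (c : ℂ) (5 / 6 * (2 / 3 ^ k)))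
      (Metric.sphere (c' : ℂ) (5 / 6 * (2 / 3 ^ k'))) := by
  rw [Set.disjoint_left]
  intro x hx hx'
  rw [Metric.mem_sphere] at hx hx'
  have hdist : dist (c : ℂ) (c' : ℂ) = |c - c'| := by
    rw [dist_eq_norm, ← Complex.ofReal_sub, Complex.norm_real, Real.norm_eq_abs]
  have t1 : dist (c : ℂ) (c' : ℂ) ≤ dist (c : ℂ) x + dist x (c' : ℂ) := dist_triangle _ _ _
  have t2 : dist x (c : ℂ) ≤ dist x (c' : ℂ) + dist (c' : ℂ) (c : ℂ) := dist_triangle _ _ _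
  rw [dist_comm (c : ℂ) x] at t1
  rw [dist_comm (c' : ℂ) (c : ℂ), hdist] at t2
  rw [hdist] at t1
  have hu : (0:ℝ) < 1 / 3 ^ k := by positivity
  have hv : (0:ℝ) < 1 / 3 ^ k' := by positivity
  rcases midClaim k k' c c' hkk hc hc' with h | h
  · rcases eq_or_lt_of_le hkk with rfl | hlt
    · have : c = c' := by
        have h0 : |c - c'| ≤ 0 := by linarith
        have := abs_nonneg (c - c')
        have : |c - c'| = 0 := le_antisymm h0 this
        have := abs_eq_zero.mp this
        linarith
      exact hne ⟨rfl, this⟩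
    · have hpow : (3:ℝ) ^ k < 3 ^ k' := pow_lt_pow_right₀ (by norm_num) hlt
      have hvu : (1:ℝ) / 3 ^ k' < 1 / 3 ^ k :=
        one_div_lt_one_div_of_lt (by positivity) hpow
      ring_nf at h hvu hx hx' t1 t2; linarith
  · ring_nf at h hu hv hx hx' t1 t2; linarith

/-- The circles `C(I)` (center the midpoint `c` of a level-`k` interval, radius
`(5/6)·(2/3^k)`, viewed in `ℂ`) associated with distinct intervals of the
middle-thirds construction are disjoint. -/
theorem circles_of_middle_thirds_intervals_disjoint
    (k k' : ℕ) (c c' : ℝ)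
    (hc : IsMidCenter k c) (hc' : IsMidCenter k' c')
    (hne : ¬(k = k' ∧ c = c')) :
    Disjoint (Metric.sphere (c : ℂ) (5 / 6 * (2 / 3 ^ k)))
      (Metric.sphere (c' : ℂ) (5 / 6 * (2 / 3 ^ k'))) := by
  rcases le_total k k' with h | h
  · exact circles_disjoint_ordered k k' c c' h hc hc' hne
  · exact (circles_disjoint_ordered k' k c' c h hc' hc
      (by rintro ⟨rfl, rfl⟩; exact hne ⟨rfl, rfl⟩)).symm
end
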